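/- The three binary phylogenetic trees T1 = ((1,2),(3,4)), T2 = ((1,3),(2,4)), T3 = ((1,4),(2,3)) on taxa {1,2,3,4} cannot all be displayed simultaneously in any binary tree-child network on {1,2,3,4}. -/

import Mathlib

/-- A rooted, leaf-labeled digraph: a candidate phylogenetic network on taxon set `X`. -/
structure Net (V : Type) (X : Type) where
  E : V → V → Prop
  root : V
  leaf : X → V

namespace Net

variable {V X : Type}

/-- Indegree of a vertex. -/
noncomputable def inDeg (N : Net V X) (v : V) : ℕ := {u | N.E u v}.ncard

/-- Outdegree of a vertex. -/
noncomputable def outDeg (N : Net V X) (v : V) : ℕ := {w | N.E v w}.ncard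

def IsLeaf (N : Net V X) (v : V) : Prop := N.outDeg v = 0

/-- A tree node: indegree at most one. -/
def IsTreeNode (N : Net V X) (v : V) : Prop := N.inDeg v ≤ 1

/-- A reticulate node: indegree two (or more, in the non-binary case: indegree ≥ 2). -/
def IsRet (N : Net V X) (v : V) : Prop := 2 ≤ N.inDeg v

def Acyclic (N : Net V X) : Prop := ∀ v, ¬ Relation.TransGen N.E v v

/-- Common well-formedness conditions of a rooted phylogenetic network:
acyclic, rooted, every node reachable from the root, leaves bijectively labeled by `X`. -/
structure IsPhylo (N : Net V X) : Prop where
  acyclic : N.Acyclic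
  rootIn : N.inDeg N.root = 0
  reach : ∀ v, Relation.ReflTransGen N.E N.root v
  leafInj : Function.Injective N.leaf
  leafIsLeaf : ∀ x, N.IsLeaf (N.leaf x)
  leafSurj : ∀ v, N.IsLeaf v → ∃ x, N.leaf x = v
  leafIn : ∀ x, N.inDeg (N.leaf x) = 1

/-- A binary phylogenetic network: every non-leaf node is either a tree node
(indegree ≤ 1, outdegree 2) or a reticulate node (indegree 2, outdegree 1). -/
structure IsBinaryNet (N : Net V X) extends IsPhylo N : Prop where
  deg : ∀ v, ¬ N.IsLeaf v →
    (N.inDeg v ≤ 1 ∧ N.outDeg v = 2) ∨ (N.inDeg v = 2 ∧ N.outDeg v = 1)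

/-- Tree-child property: every non-leaf node has a child that is a tree node. -/
def TreeChild (N : Net V X) : Prop :=
  ∀ v, ¬ N.IsLeaf v → ∃ w, N.E v w ∧ N.IsTreeNode w

/-- A binary phylogenetic tree: a binary phylogenetic network without reticulate nodes. -/
def IsBinaryTree (N : Net V X) : Prop := N.IsBinaryNet ∧ ∀ v, N.inDeg v ≤ 1

/-- A tree edge: an edge entering a tree node. -/
def TreeEdge (N : Net V X) (u v : V) : Prop := N.E u v ∧ N.IsTreeNode v

/-- The tree component rooted at `x`: all nodes reachable from `x` via tree edges. -/
def comp (N : Net V X) (x : V) : Set V := {v | Relation.ReflTransGen N.TreeEdge x v}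

/-- `u` and `v` lie in a common tree component. -/
def InSameComp (N : Net V X) (u v : V) : Prop :=
  ∃ x, (x = N.root ∨ N.IsRet x) ∧ u ∈ N.comp x ∧ v ∈ N.comp x

/-- The taxa `x` and `y` form a cherry: their leaves share a common parent. -/
def HasCherry (N : Net V X) (x y : X) : Prop :=
  x ≠ y ∧ ∃ p, N.E p (N.leaf x) ∧ N.E p (N.leaf y)

/-- The set of cherries of a tree, as unordered pairs of taxa. -/
def cherries (N : Net V X) : Set (Sym2 X) :=
  {p | ∃ x y, p = s(x, y) ∧ N.HasCherry x y}

/-- The tree has the 3-subtree `((a,b),c)`: a node whose two children are the leaf `c`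
and the parent of the cherry `(a,b)`. -/
def Has3Subtree (N : Net V X) (a b c : X) : Prop :=
  a ≠ b ∧ a ≠ c ∧ b ≠ c ∧
  ∃ v p, N.E v p ∧ N.E v (N.leaf c) ∧ N.E p (N.leaf a) ∧ N.E p (N.leaf b)

def IsAncestor (N : Net V X) (u v : V) : Prop := Relation.ReflTransGen N.E u v

/-- `l` is the least common ancestor of `u` and `v`. -/
def IsLCA (N : Net V X) (l u v : V) : Prop :=
  N.IsAncestor l u ∧ N.IsAncestor l v ∧
  ∀ w, N.IsAncestor w u → N.IsAncestor w v → N.IsAncestor w l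

end Net

/-- Paths in `S` from `a` to `b` whose vertices other than `a` and `b` avoid the set `A`. -/
def pathAvoid {V : Type} (S : V → V → Prop) (A : Set V) (a b : V) : Prop :=
  Relation.ReflTransGen (fun u v => S u v ∧ (v = b ∨ v ∉ A)) a b

/-- `T` is displayed in `N`: `N` contains a subdivision of `T` preserving the leaf labels,
i.e. `T` is obtained from `N` by deleting all but one incoming edge at each reticulate node,
pruning nodes without labeled leaf descendants, and suppressing degree-two nodes. -/
def Display {VT V X : Type} (T : Net VT X) (N : Net V X) : Prop :=
  ∃ (S : V → V → Prop) (φ : VT → V),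
    (∀ u v, S u v → N.E u v) ∧
    Function.Injective φ ∧
    (∀ x, φ (T.leaf x) = N.leaf x) ∧
    (∀ a b, T.E a b → pathAvoid S (Set.range φ) (φ a) (φ b)) ∧
    (∀ a : VT, {w | S (φ a) w}.ncard = T.outDeg a ∧ {u | S u (φ a)}.ncard = T.inDeg a) ∧
    (∀ v : V, v ∉ Set.range φ → ((∃ u, S u v) ∨ (∃ w, S v w)) →
      {w | S v w}.ncard = 1 ∧ {u | S u v}.ncard = 1)

/-- `N` displays the cherry `(x, y)`: some binary tree displayed in `N` has `(x,y)` as a cherry. -/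
def DisplaysCherry {V X : Type} (N : Net V X) (x y : X) : Prop :=
  ∃ (VT : Type) (T : Net VT X),
    Finite VT ∧ T.IsBinaryTree ∧ Display T N ∧ T.HasCherry x y

/-- `N` displays the 3-subtree `((a,b),c)`. -/
def Displays3Subtree {V X : Type} (N : Net V X) (a b c : X) : Prop :=
  ∃ (VT : Type) (T : Net VT X),
    Finite VT ∧ T.IsBinaryTree ∧ Display T N ∧ T.Has3Subtree a b c

/-- Isomorphism of leaf-labeled rooted digraphs. -/
def NetIso {V1 V2 X : Type} (N1 : Net V1 X) (N2 : Net V2 X) : Prop :=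
  ∃ f : V1 ≃ V2, (∀ u v, N1.E u v ↔ N2.E (f u) (f v)) ∧
    f N1.root = N2.root ∧ ∀ x, f (N1.leaf x) = N2.leaf x

/-!
Take a lowest non-leaf vertex `m` of the tree-child network `N`, so that all children of `m` are
leaves. If `m` is a tree vertex, its two leaves `t` and `w` form a cherry of every displayed tree.
If `m` is a reticulation above the leaf `t`, each parent `p` of `m` has a tree-vertex child
`s ≠ m`, from which tree edges lead down to a leaf `a`; a displayed tree that keeps the edge
`p → m` must pair `t` with `a`. Either way some taxon `t` has at most two cherry partners in the
trees displayed by `N`, whereas `T1`, `T2` and `T3` give every taxon three different partners.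
-/

open Relation

theorem Relation.ReflTransGen.of_forall_rel_eq {α : Type} {r : α → α → Prop} {a b c : α}
    (h : ReflTransGen r a b) (hab : a ≠ b) (hc : ∀ u, r u b → u = c) : ReflTransGen r a c := by
  rcases h.cases_tail with rfl | ⟨u, hau, hub⟩
  · exact absurd rfl hab
  · exact hc u hub ▸ hau

theorem Relation.ReflTransGen.eq_of_forall_not_rel {α : Type} {r : α → α → Prop} {a b : α}
    (h : ReflTransGen r a b) (hb : ∀ u, ¬ r u b) : a = b := by
  rcases h.cases_tail with rfl | ⟨u, -, hub⟩
  · rfl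
  · exact absurd hub (hb u)

theorem pathAvoid.eq_of_reflTransGen {α : Type} {S : α → α → Prop} {A : Set α} {a b c : α}
    (hcb : pathAvoid S A c b) (hca : ReflTransGen S c a) (hc : c = b ∨ c ∉ A)
    (hdet : ∀ v ∉ A, ∀ w w', S v w → S v w' → w = w') (hb : ∀ w, ¬ S b w) (ha : ∀ w, ¬ S a w) :
    b = a := by
  induction hcb using Relation.ReflTransGen.head_induction_on with
  | refl => exact hca.cases_head.resolve_right fun ⟨e, hbe, _⟩ => hb e hbe
  | head hcd _ ih =>
    rcases hca.cases_head with rfl | ⟨e, hce, hea⟩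
    · exact absurd hcd.1 (ha _)
    · have hcA : _ ∉ A := hc.resolve_left fun h => hb _ (h ▸ hcd.1)
      exact ih (hdet _ hcA _ _ hcd.1 hce ▸ hea) hcd.2

namespace Net

variable {V X : Type} {N : Net V X} {u v w : V}

theorem IsLeaf.not_edge [Finite V] (h : N.IsLeaf v) : ¬ N.E v w := fun hvw =>
  ((Set.ncard_pos).mpr ⟨w, hvw⟩).ne' h

theorem eq_of_edge_of_inDeg_le_one [Finite V] (hv : N.inDeg v ≤ 1) (hu : N.E u v)
    (hw : N.E w v) : u = w :=
  (Set.ncard_le_one_iff).mp hv hu hw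

theorem IsPhylo.eq_of_edge_leaf (hN : N.IsPhylo) {x : X} (hu : N.E u (N.leaf x))
    (hw : N.E w (N.leaf x)) : u = w := by
  have h : {u | N.E u (N.leaf x)}.ncard = 1 := hN.leafIn x
  exact (Set.ncard_le_one_iff (Set.finite_of_ncard_ne_zero (by omega))).mp h.le hu hw

theorem IsPhylo.exists_edge_leaf (hN : N.IsPhylo) (x : X) : ∃ b, N.E b (N.leaf x) :=
  Set.nonempty_of_ncard_ne_zero (s := {b | N.E b (N.leaf x)}) (by rw [← inDeg, hN.leafIn x]; omega)

theorem Acyclic.wellFounded [Finite V] (h : N.Acyclic) : WellFounded (flip (TransGen N.E)) :=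
  have : IsTrans V (flip (TransGen N.E)) := ⟨fun _ _ _ h₁ h₂ => h₂.trans h₁⟩
  have : Std.Irrefl (flip (TransGen N.E)) := ⟨h⟩
  Finite.wellFounded_of_trans_of_irrefl _

theorem IsPhylo.exists_forall_child_isLeaf [Finite V] [Nontrivial X] (hN : N.IsPhylo) :
    ∃ m, ¬ N.IsLeaf m ∧ ∀ w, N.E m w → N.IsLeaf w := by
  have hroot : ¬ N.IsLeaf N.root := fun h => by
    have hleaf (x : X) : N.root = N.leaf x :=
      (hN.reach _).cases_head.resolve_right fun ⟨_, he, _⟩ => h.not_edge he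
    obtain ⟨x, y, hxy⟩ := exists_pair_ne X
    exact hxy (hN.leafInj ((hleaf x).symm.trans (hleaf y)))
  obtain ⟨m, hm, hmin⟩ := hN.acyclic.wellFounded.has_min {v | ¬ N.IsLeaf v} ⟨_, hroot⟩
  exact ⟨m, hm, fun w hw => not_not.mp fun hw' => hmin w hw' (.single hw)⟩

theorem TreeChild.exists_isLeaf_mem_comp [Finite V] (htc : N.TreeChild) (hac : N.Acyclic)
    (s : V) : ∃ a, N.IsLeaf a ∧ a ∈ N.comp s := by
  induction s using hac.wellFounded.induction with
  | _ s ih =>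
    by_cases hs : N.IsLeaf s
    · exact ⟨s, hs, .refl⟩
    · obtain ⟨w, hsw, hw⟩ := htc s hs
      obtain ⟨a, ha, hwa⟩ := ih w (.single hsw)
      exact ⟨a, ha, .head ⟨hsw, hw⟩ hwa⟩

theorem IsBinaryNet.exists_treeNode_sibling [Finite V] (hN : N.IsBinaryNet) (htc : N.TreeChild)
    {p r : V} (hr : ¬ N.IsTreeNode r) (hpr : N.E p r) :
    ∃ s, s ≠ r ∧ N.IsTreeNode s ∧ N.E p s ∧ ∀ w, N.E p w → w = r ∨ w = s := by
  have hp : ¬ N.IsLeaf p := fun h => h.not_edge hpr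
  obtain ⟨s, hps, hs⟩ := htc p hp
  have hsr : s ≠ r := fun h => hr (h ▸ hs)
  have hsub : {r, s} ⊆ {w | N.E p w} := Set.insert_subset hpr (Set.singleton_subset_iff.mpr hps)
  have hle : N.outDeg p ≤ ({r, s} : Set V).ncard := by
    rw [Set.ncard_pair hsr.symm]
    rcases hN.deg p hp with ⟨-, h⟩ | ⟨-, h⟩ <;> omega
  refine ⟨s, hsr, hs, hps, fun w hw => ?_⟩
  have hw' : w ∈ ({r, s} : Set V) := by rw [Set.eq_of_subset_of_ncard_le hsub hle]; exact hw
  simpa using hw'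

theorem HasCherry.symm {x y : X} (h : N.HasCherry x y) : N.HasCherry y x :=
  ⟨h.1.symm, h.2.imp fun _ hp => hp.symm⟩

theorem IsBinaryTree.outDeg_eq_zero_or_two (hN : N.IsBinaryTree) (v : V) :
    N.outDeg v = 0 ∨ N.outDeg v = 2 := by
  by_cases h : N.IsLeaf v
  · exact .inl h
  · rcases hN.1.deg v h with ⟨-, h2⟩ | ⟨h2, -⟩
    · exact .inr h2
    · exact absurd (hN.2 v) (by omega)

theorem IsBinaryTree.eq_of_hasCherry [Finite V] (hN : N.IsBinaryTree) {x y z : X}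
    (hy : N.HasCherry x y) (hz : N.HasCherry x z) : y = z := by
  obtain ⟨hxy, b, hbx, hby⟩ := hy
  obtain ⟨hxz, b', hbx', hbz⟩ := hz
  obtain rfl := hN.1.eq_of_edge_leaf hbx hbx'
  by_contra hyz
  have hinj := hN.1.leafInj
  have h3 : 2 < N.outDeg b := (Set.two_lt_ncard_iff).mpr
    ⟨_, _, _, hbx, hby, hbz, hinj.ne hxy, hinj.ne hxz, hinj.ne hyz⟩
  rcases hN.outDeg_eq_zero_or_two b with h | h <;> omega

end Net

structure IsDisplayEmbedding {VT V X : Type} (T : Net VT X) (N : Net V X) (S : V → V → Prop)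
    (φ : VT → V) : Prop where
  sub : ∀ u v, S u v → N.E u v
  inj : Function.Injective φ
  map_leaf : ∀ x, φ (T.leaf x) = N.leaf x
  path : ∀ a b, T.E a b → pathAvoid S (Set.range φ) (φ a) (φ b)
  deg_map : ∀ a, {w | S (φ a) w}.ncard = T.outDeg a ∧ {u | S u (φ a)}.ncard = T.inDeg a
  deg_off : ∀ v, v ∉ Set.range φ → ((∃ u, S u v) ∨ (∃ w, S v w)) →
    {w | S v w}.ncard = 1 ∧ {u | S u v}.ncard = 1

theorem Display.exists_isDisplayEmbedding {VT V X : Type} {T : Net VT X} {N : Net V X}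
    (h : Display T N) : ∃ S φ, IsDisplayEmbedding T N S φ :=
  let ⟨S, φ, h₁, h₂, h₃, h₄, h₅, h₆⟩ := h
  ⟨S, φ, h₁, h₂, h₃, h₄, h₅, h₆⟩

namespace IsDisplayEmbedding

variable {VT V X : Type} {T : Net VT X} {N : Net V X} {S : V → V → Prop} {φ : VT → V}

theorem rel_of_edge_leaf (D : IsDisplayEmbedding T N S φ) (hN : N.IsPhylo) (hT : T.IsPhylo)
    {P : V} {x : X} (hP : N.E P (N.leaf x)) : S P (N.leaf x) := by
  have h := (D.deg_map (T.leaf x)).2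
  rw [D.map_leaf, hT.leafIn x] at h
  obtain ⟨u, hu⟩ := Set.nonempty_of_ncard_ne_zero (h ▸ one_ne_zero)
  exact hN.eq_of_edge_leaf (D.sub _ _ hu) hP ▸ hu

theorem reflTransGen_map (D : IsDisplayEmbedding T N S φ) {a b : VT}
    (h : ReflTransGen T.E a b) : ReflTransGen S (φ a) (φ b) := by
  induction h with
  | refl => exact .refl
  | tail _ hbc ih =>
    exact ih.trans (ReflTransGen.mono (fun _ _ (h : S _ _ ∧ _) => h.1) _ _ (D.path _ _ hbc))

theorem eq_of_rel_of_not_mem_range [Finite V] (D : IsDisplayEmbedding T N S φ) {v w w' : V}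
    (hv : v ∉ Set.range φ) (hw : S v w) (hw' : S v w') : w = w' :=
  (Set.ncard_le_one_iff).mp (D.deg_off v hv (.inr ⟨w, hw⟩)).1.le hw hw'

theorem mem_range_of_rel_of_rel [Finite V] (D : IsDisplayEmbedding T N S φ) {v w w' : V}
    (hw : S v w) (hw' : S v w') (hne : w ≠ w') : v ∈ Set.range φ :=
  not_not.mp fun hv => hne (D.eq_of_rel_of_not_mem_range hv hw hw')

theorem not_mem_range_of_outDeg_eq_one [Finite V] (D : IsDisplayEmbedding T N S φ)
    (hN : N.IsPhylo) (hT : T.IsBinaryTree) {r : V} (hr : N.outDeg r = 1) :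
    r ∉ Set.range φ := by
  rintro ⟨τ, rfl⟩
  have hle : T.outDeg τ ≤ 1 :=
    (D.deg_map τ).1 ▸ hr ▸ Set.ncard_le_ncard fun w hw => D.sub _ _ hw
  obtain ⟨x, rfl⟩ := hT.1.leafSurj τ (by
    show T.outDeg τ = 0; rcases hT.outDeg_eq_zero_or_two τ with h | h <;> omega)
  have h := hN.leafIsLeaf x
  rw [← D.map_leaf, Net.IsLeaf] at h
  omega

theorem rel_to_ncard_eq_one [Finite V] (D : IsDisplayEmbedding T N S φ) (hN : N.IsPhylo)
    (hT : T.IsBinaryTree) {r : V} {t : X} (hr : {w | N.E r w} = {N.leaf t}) :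
    {u | S u r}.ncard = 1 := by
  have hrt : N.leaf t ∈ {w | N.E r w} := hr ▸ rfl
  have hrA := D.not_mem_range_of_outDeg_eq_one hN hT (by rw [Net.outDeg, hr, Set.ncard_singleton])
  exact (D.deg_off r hrA (.inr ⟨_, D.rel_of_edge_leaf hN hT.1.1 hrt⟩)).2

theorem exists_rel_to (D : IsDisplayEmbedding T N S φ) (hT : T.IsPhylo) {c : V}
    (hc : ∃ w, S c w) (hroot : φ T.root ≠ c) : ∃ u, S u c := by
  by_cases hcA : c ∈ Set.range φ
  · obtain ⟨τ, rfl⟩ := hcA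
    obtain ⟨σ, -, hστ⟩ := (hT.reach τ).cases_tail.resolve_left fun h => hroot (h ▸ rfl)
    have hne : φ τ ≠ φ σ := D.inj.ne fun h => hT.acyclic τ (.single (h ▸ hστ))
    obtain ⟨u, -, hu⟩ := (D.path σ τ hστ).cases_tail.resolve_left hne
    exact ⟨u, hu.1⟩
  · exact Set.nonempty_of_ncard_ne_zero ((D.deg_off c hcA (.inr hc)).2 ▸ one_ne_zero)

theorem reflTransGen_of_mem_comp [Finite V] (D : IsDisplayEmbedding T N S φ) (hN : N.IsPhylo)
    (hT : T.IsPhylo) {s a : V} (ha : N.IsLeaf a) (hsa : a ∈ N.comp s)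
    (hroot : φ T.root ∉ N.comp s) : ReflTransGen S s a ∧ ∃ u, S u s := by
  induction (hsa : ReflTransGen N.TreeEdge s a) using Relation.ReflTransGen.head_induction_on with
  | refl =>
    obtain ⟨x, rfl⟩ := hN.leafSurj a ha
    obtain ⟨P, hP⟩ := hN.exists_edge_leaf x
    exact ⟨.refl, P, D.rel_of_edge_leaf hN hT hP⟩
  | head hsd _ ih =>
    obtain ⟨hda', u, hud⟩ := ih fun h => hroot (Relation.ReflTransGen.head hsd h)
    have hsd' := Net.eq_of_edge_of_inDeg_le_one hsd.2 (D.sub _ _ hud) hsd.1 ▸ hud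
    exact ⟨.head hsd' hda', D.exists_rel_to hT ⟨_, hsd'⟩ fun h => hroot (h ▸ .refl)⟩

theorem hasCherry_of_hasCherry [Finite V] (D : IsDisplayEmbedding T N S φ) (hN : N.IsPhylo)
    (hT : T.IsPhylo) {x z : X} (h : N.HasCherry x z) : T.HasCherry x z := by
  obtain ⟨hxz, P, hx, hz⟩ := h
  have hPA := D.mem_range_of_rel_of_rel (D.rel_of_edge_leaf hN hT hx)
    (D.rel_of_edge_leaf hN hT hz) (hN.leafInj.ne hxz)
  have hmap {y : X} {b : VT} (hy : N.E P (N.leaf y)) (hb : T.E b (T.leaf y)) : φ b = P := by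
    have hpath := D.path b _ hb
    rw [D.map_leaf] at hpath
    have hne : φ b ≠ N.leaf y :=
      D.map_leaf y ▸ D.inj.ne fun h => hT.acyclic b (.single (h ▸ hb))
    refine (hpath.of_forall_rel_eq hne fun u hu => hN.eq_of_edge_leaf (D.sub _ _ hu.1) hy)
      |>.eq_of_forall_not_rel fun u hu => hu.2.elim (fun h => ?_) (· hPA)
    exact (hN.leafIsLeaf y).not_edge (h ▸ hy)
  obtain ⟨bx, hbx⟩ := hT.exists_edge_leaf x
  obtain ⟨bz, hbz⟩ := hT.exists_edge_leaf z
  exact ⟨hxz, bx, hbx, D.inj ((hmap hz hbz).trans (hmap hx hbx).symm) ▸ hbz⟩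

/-- The last two steps of the path are forced: `r` is the only parent of the leaf, and `p` the
only `S`-parent of `r`, which has outdegree one and so lies outside the image of `φ`. -/
theorem reflTransGen_parent_of_ret [Finite V] (D : IsDisplayEmbedding T N S φ) (hN : N.IsPhylo)
    (hT : T.IsBinaryTree) {R : V → V → Prop} (hRS : ∀ u v, R u v → S u v) {r p c : V} {t : X}
    (hr : {w | N.E r w} = {N.leaf t}) (hpr : S p r) (h : ReflTransGen R c (N.leaf t))
    (hc : c ∈ Set.range φ) (hct : c ≠ N.leaf t) : ReflTransGen R c p := by
  have hrt : N.leaf t ∈ {w | N.E r w} := hr ▸ rfl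
  have hrA := D.not_mem_range_of_outDeg_eq_one hN hT (by rw [Net.outDeg, hr, Set.ncard_singleton])
  refine (h.of_forall_rel_eq hct fun u hu => hN.eq_of_edge_leaf (D.sub _ _ (hRS _ _ hu)) hrt)
    |>.of_forall_rel_eq (fun h => hrA (h ▸ hc)) fun u hu => ?_
  exact (Set.ncard_le_one_iff).mp (D.rel_to_ncard_eq_one hN hT hr).le (hRS _ _ hu) hpr

theorem map_root_not_mem_comp [Finite V] (D : IsDisplayEmbedding T N S φ) (hN : N.IsPhylo)
    (hT : T.IsBinaryTree) {r p s : V} {t : X} (hr : {w | N.E r w} = {N.leaf t}) (hpr : S p r)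
    (hps : N.E p s) : φ T.root ∉ N.comp s := by
  have hroot_p : ReflTransGen N.E (φ T.root) p := by
    have h := D.reflTransGen_map (hT.1.reach (T.leaf t))
    rw [D.map_leaf] at h
    have hne : φ T.root ≠ N.leaf t := D.map_leaf t ▸ D.inj.ne fun h => by
      simpa [← h, hT.1.rootIn] using hT.1.leafIn t
    exact ReflTransGen.mono D.sub _ _
      (D.reflTransGen_parent_of_ret hN hT (fun _ _ h => h) hr hpr h ⟨_, rfl⟩ hne)
  exact fun h => hN.acyclic p <|
    (TransGen.head' hps (ReflTransGen.mono (fun _ _ h => h.1) _ _ h)).trans_left hroot_p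

/-- If `S` keeps the edge from `p` into a reticulation whose only child is the leaf `t`, then the
image of the parent of `t` in the displayed tree is `p`, and the path to the cherry partner of `t`
must leave `p` through its other child `s`; from there it is forced down the tree path to `a`. -/
theorem leaf_eq_of_hasCherry [Finite V] (D : IsDisplayEmbedding T N S φ) (hN : N.IsPhylo)
    (hT : T.IsBinaryTree) {r p s a : V} {t ζ : X} (hr : {w | N.E r w} = {N.leaf t})
    (hpr : S p r) (hsr : s ≠ r) (hs : N.IsTreeNode s) (hps : N.E p s)
    (hp : ∀ w, N.E p w → w = r ∨ w = s) (ha : N.IsLeaf a) (hsa : a ∈ N.comp s)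
    (hch : T.HasCherry t ζ) : N.leaf ζ = a := by
  obtain ⟨htζ, b, hbt, hbζ⟩ := hch
  obtain ⟨hSsa, u, hus⟩ :=
    D.reflTransGen_of_mem_comp hN hT.1.1 ha hsa (D.map_root_not_mem_comp hN hT hr hpr hps)
  have hpA := D.mem_range_of_rel_of_rel hpr
    (Net.eq_of_edge_of_inDeg_le_one hs (D.sub _ _ hus) hps ▸ hus) hsr.symm
  have hpnl : ¬ N.IsLeaf p := fun h => h.not_edge hps
  have hb : φ b = p := by
    have h := D.path b _ hbt
    rw [D.map_leaf] at h
    have hne : φ b ≠ N.leaf t :=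
      D.map_leaf t ▸ D.inj.ne fun h => hT.1.acyclic b (.single (h ▸ hbt))
    refine (D.reflTransGen_parent_of_ret hN hT (fun _ _ h => h.1) hr hpr h ⟨b, rfl⟩
      hne).eq_of_forall_not_rel fun u hu => hu.2.elim (fun h => ?_) (· hpA)
    exact hpnl (h ▸ hN.leafIsLeaf t)
  have h := D.path b _ hbζ
  rw [D.map_leaf, hb] at h
  obtain ⟨w, hpw, hwζ⟩ := h.cases_head.resolve_left fun h => hpnl (h ▸ hN.leafIsLeaf ζ)
  rcases hp w (D.sub _ _ hpw.1) with hw | hw <;> subst w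
  · have hrt : N.leaf t ∈ {v | N.E r v} := hr ▸ rfl
    obtain ⟨y, hry, -⟩ := hwζ.cases_head.resolve_left fun h => (hN.leafIsLeaf ζ).not_edge (h ▸ hrt)
    obtain rfl : y ∈ ({N.leaf t} : Set V) := hr ▸ D.sub _ _ hry.1
    rcases hry.2 with h | h
    · exact absurd (hN.leafInj h) htζ
    · exact absurd ⟨_, D.map_leaf t⟩ h
  · exact pathAvoid.eq_of_reflTransGen hwζ hSsa hpw.2
      (fun _ hv _ _ => D.eq_of_rel_of_not_mem_range hv)
      (fun _ h => (hN.leafIsLeaf ζ).not_edge (D.sub _ _ h)) (fun _ h => ha.not_edge (D.sub _ _ h))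

end IsDisplayEmbedding

def CherryPartnersWithin {V X : Type} (N : Net V X) (t : X) (P : Set X) : Prop :=
  ∀ (VT : Type) (T : Net VT X), Finite VT → T.IsBinaryTree → Display T N →
    ∀ ζ, T.HasCherry t ζ → ζ ∈ P

namespace Net

variable {V X : Type} [Finite V] {N : Net V X}

theorem HasCherry.cherryPartnersWithin (hN : N.IsPhylo) {t w : X} (h : N.HasCherry t w) :
    CherryPartnersWithin N t {w} := by
  intro VT T _ hT hD ζ hζ
  obtain ⟨S, φ, D⟩ := hD.exists_isDisplayEmbedding
  exact hT.eq_of_hasCherry hζ (D.hasCherry_of_hasCherry hN hT.1.1 h)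

theorem IsBinaryNet.exists_partner_of_parent (hN : N.IsBinaryNet) (htc : N.TreeChild)
    {r p : V} {t : X} (hret : ¬ N.IsTreeNode r) (hr : {w | N.E r w} = {N.leaf t})
    (hpr : N.E p r) :
    ∃ α, ∀ (VT : Type) (T : Net VT X) S φ, T.IsBinaryTree → IsDisplayEmbedding T N S φ →
      S p r → ∀ ζ, T.HasCherry t ζ → ζ = α := by
  obtain ⟨s, hsr, hs, hps, hp⟩ := hN.exists_treeNode_sibling htc hret hpr
  obtain ⟨a, ha, hsa⟩ := htc.exists_isLeaf_mem_comp hN.acyclic s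
  obtain ⟨α, rfl⟩ := hN.leafSurj a ha
  exact ⟨α, fun _ _ _ _ hT D hSpr _ hζ =>
    hN.leafInj (D.leaf_eq_of_hasCherry hN.1 hT hr hSpr hsr hs hps hp ha hsa hζ)⟩

theorem IsBinaryNet.cherryPartnersWithin_of_ret (hN : N.IsBinaryNet) (htc : N.TreeChild)
    {r : V} {t : X} (hin : N.inDeg r = 2) (hr : {w | N.E r w} = {N.leaf t}) :
    ∃ α β, CherryPartnersWithin N t {α, β} := by
  obtain ⟨p, q, -, hpq⟩ := Set.ncard_eq_two.mp hin
  have hret : ¬ N.IsTreeNode r := by unfold IsTreeNode; omega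
  have hp : p ∈ {u | N.E u r} := hpq ▸ Set.mem_insert p {q}
  have hq : q ∈ {u | N.E u r} := hpq ▸ Set.mem_insert_of_mem p rfl
  obtain ⟨α, hα⟩ := hN.exists_partner_of_parent htc hret hr hp
  obtain ⟨β, hβ⟩ := hN.exists_partner_of_parent htc hret hr hq
  refine ⟨α, β, fun VT T _ hT hD ζ hζ => ?_⟩
  obtain ⟨S, φ, D⟩ := hD.exists_isDisplayEmbedding
  obtain ⟨u, hu⟩ := Set.nonempty_of_ncard_ne_zero (D.rel_to_ncard_eq_one hN.1 hT hr ▸ one_ne_zero)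
  obtain rfl | rfl : u ∈ ({p, q} : Set V) := hpq ▸ D.sub _ _ hu
  · exact .inl (hα VT T S φ hT D hu ζ hζ)
  · exact .inr (hβ VT T S φ hT D hu ζ hζ)

theorem IsBinaryNet.exists_cherryPartnersWithin_pair [Nontrivial X] (hN : N.IsBinaryNet)
    (htc : N.TreeChild) : ∃ t α β, CherryPartnersWithin N t {α, β} := by
  obtain ⟨m, hm, hleaf⟩ := hN.1.exists_forall_child_isLeaf
  rcases hN.deg m hm with ⟨-, hout⟩ | ⟨hin, hout⟩
  · obtain ⟨x, z, hxz, hmxz⟩ := Set.ncard_eq_two.mp hout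
    have hx : x ∈ {w | N.E m w} := hmxz ▸ Set.mem_insert x {z}
    have hz : z ∈ {w | N.E m w} := hmxz ▸ Set.mem_insert_of_mem x rfl
    obtain ⟨u, rfl⟩ := hN.leafSurj x (hleaf x hx)
    obtain ⟨w, rfl⟩ := hN.leafSurj z (hleaf z hz)
    refine ⟨u, w, w, ?_⟩
    simpa using HasCherry.cherryPartnersWithin hN.1 ⟨fun h => hxz (congrArg N.leaf h), m, hx, hz⟩
  · obtain ⟨y, hmy⟩ := Set.ncard_eq_one.mp hout
    have hy : y ∈ {w | N.E m w} := hmy ▸ rfl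
    obtain ⟨t, rfl⟩ := hN.leafSurj y (hleaf y hy)
    exact ⟨t, hN.cherryPartnersWithin_of_ret htc hin hmy⟩

end Net

theorem exists_distinct_cherry_partners {V1 V2 V3 : Type} {T1 : Net V1 (Fin 4)}
    {T2 : Net V2 (Fin 4)} {T3 : Net V3 (Fin 4)}
    (c1 : T1.HasCherry 0 1 ∧ T1.HasCherry 2 3) (c2 : T2.HasCherry 0 2 ∧ T2.HasCherry 1 3)
    (c3 : T3.HasCherry 0 3 ∧ T3.HasCherry 1 2) (t : Fin 4) :
    ∃ m1 m2 m3 : Fin 4, T1.HasCherry t m1 ∧ T2.HasCherry t m2 ∧ T3.HasCherry t m3 ∧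
      m1 ≠ m2 ∧ m1 ≠ m3 ∧ m2 ≠ m3 := by
  fin_cases t
  · exact ⟨1, 2, 3, c1.1, c2.1, c3.1, by decide⟩
  · exact ⟨0, 3, 2, c1.1.symm, c2.2, c3.2, by decide⟩
  · exact ⟨3, 0, 1, c1.2, c2.1.symm, c3.2.symm, by decide⟩
  · exact ⟨2, 1, 0, c1.2.symm, c2.2.symm, c3.1.symm, by decide⟩

/-- The three binary trees `((1,2),(3,4))`, `((1,3),(2,4))`, `((1,4),(2,3))` on four taxa
(each determined by its two disjoint cherries) cannot be displayed simultaneously in any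
binary tree-child network on those taxa. -/
theorem stmt_14 (V1 V2 V3 : Type) (T1 : Net V1 (Fin 4)) (T2 : Net V2 (Fin 4))
    (T3 : Net V3 (Fin 4))
    (f1 : Finite V1) (f2 : Finite V2) (f3 : Finite V3)
    (h1 : T1.IsBinaryTree) (h2 : T2.IsBinaryTree) (h3 : T3.IsBinaryTree)
    (c1 : T1.HasCherry 0 1 ∧ T1.HasCherry 2 3)
    (c2 : T2.HasCherry 0 2 ∧ T2.HasCherry 1 3)
    (c3 : T3.HasCherry 0 3 ∧ T3.HasCherry 1 2) :
    ∀ (V : Type) (N : Net V (Fin 4)), Finite V → N.IsBinaryNet → N.TreeChild →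
      ¬ (Display T1 N ∧ Display T2 N ∧ Display T3 N) := by
  rintro V N _ hN htc ⟨d1, d2, d3⟩
  obtain ⟨t, α, β, hP⟩ := hN.exists_cherryPartnersWithin_pair htc
  obtain ⟨m1, m2, m3, hm1, hm2, hm3, h12, h13, h23⟩ := exists_distinct_cherry_partners c1 c2 c3 t
  have e1 := hP V1 T1 f1 h1 d1 m1 hm1
  have e2 := hP V2 T2 f2 h2 d2 m2 hm2
  have e3 := hP V3 T3 f3 h3 d3 m3 hm3
  grind
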